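/- For n ≥ 1 and real numbers ρ₁, ρ₂ with 0 ≤ ρ₁ ≤ ρ₂, the vector of eigenvalues of the n×n exponential correlation matrix E_n(ρ₁) is majorized by the vector of eigenvalues of E_n(ρ₂). -/

import Mathlib

open Matrix

noncomputable section

/-- Sum of the `k` largest components of a finite real vector, expressed as the
supremum of sums over subsets of cardinality `k`. -/
def sumKLargest {ι : Type*} [Fintype ι] (a : ι → ℝ) (k : ℕ) : ℝ :=
  sSup {x : ℝ | ∃ s : Finset ι, s.card = k ∧ x = ∑ i ∈ s, a i}

/-- `a` is majorized by `b`: for every `k`, the sum of the `k` largest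
components of `a` is at most that of `b`, and the total sums are equal. -/
def MajorizedBy {ι ι' : Type*} [Fintype ι] [Fintype ι'] (a : ι → ℝ) (b : ι' → ℝ) : Prop :=
  (∀ k : ℕ, k ≤ Fintype.card ι → sumKLargest a k ≤ sumKLargest b k) ∧
    ∑ i, a i = ∑ i, b i

/-- The `n × n` exponential correlation matrix `E_n(ρ)`: the `(i,j)` entry is
`ρ^{|i−j|}`. -/
def expCorr (n : ℕ) (ρ : ℝ) : Matrix (Fin n) (Fin n) ℝ :=
  Matrix.of fun i j => ρ ^ ((i : ℤ) - (j : ℤ)).natAbs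

lemma expCorr_isHermitian (n : ℕ) (ρ : ℝ) : (expCorr n ρ).IsHermitian := by
  ext i j
  have h : ((j : ℤ) - (i : ℤ)).natAbs = ((i : ℤ) - (j : ℤ)).natAbs := by
    rw [← Int.natAbs_neg, neg_sub]
  simp [expCorr, Matrix.conjTranspose_apply, h]

/-!
Since `ρ₂ ^ |i - j| * t ^ |i - j| = ρ₁ ^ |i - j|` for `t = ρ₁ / ρ₂`, the matrix `E_n(ρ₁)` is the
Hadamard product `C ⊙ A` of `A = E_n(ρ₂)` with `C = E_n(t)`, and `C` is a correlation matrix: it is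
positive semidefinite (the covariance of a stationary AR(1) process) with unit diagonal.
For such `C` the eigenvalues of `C ⊙ A` are majorized by those of `A`. The traces agree because
`C` has unit diagonal. If `P` is the projection onto `k` eigenvectors of `C ⊙ A`, then
`tr (P (C ⊙ A)) = tr ((Cᵀ ⊙ P) A)`, and by the Schur product theorem `0 ≤ Cᵀ ⊙ P ≤ 1` with trace
`k`. Ky Fan's maximum principle bounds `tr (X A)` over such `X` by the sum of the `k` largest
eigenvalues of `A`: in an eigenbasis of `A` it reduces to maximizing `∑ λᵢ dᵢ` subject to
`0 ≤ dᵢ ≤ 1`, `∑ dᵢ = k`.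
-/

section SumKLargest

variable {ι : Type*} [Fintype ι]

lemma le_sumKLargest (a : ι → ℝ) {k : ℕ} {s : Finset ι} (hs : s.card = k) :
    ∑ i ∈ s, a i ≤ sumKLargest a k := by
  refine le_csSup ?_ ⟨s, hs, rfl⟩
  refine (Set.finite_range fun s : Finset ι => ∑ i ∈ s, a i).subset ?_ |>.bddAbove
  rintro x ⟨s, -, rfl⟩
  exact ⟨s, rfl⟩

lemma sumKLargest_le (a : ι → ℝ) {k : ℕ} (hk : k ≤ Fintype.card ι) {y : ℝ}
    (h : ∀ s : Finset ι, s.card = k → ∑ i ∈ s, a i ≤ y) : sumKLargest a k ≤ y := by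
  refine csSup_le ?_ fun x ⟨s, hs, hx⟩ => hx ▸ h s hs
  obtain ⟨s, -, hs⟩ := Finset.exists_subset_card_eq (s := Finset.univ) hk
  exact ⟨_, s, hs, rfl⟩

lemma exists_finset_card_eq_separated [DecidableEq ι] (a : ι → ℝ) {k : ℕ}
    (hk : k ≤ Fintype.card ι) :
    ∃ (s : Finset ι) (c : ℝ), s.card = k ∧ (∀ i ∈ s, c ≤ a i) ∧ ∀ j ∉ s, a j ≤ c := by
  induction k with
  | zero =>
    obtain ⟨c, hc⟩ := Finite.bddAbove_range a
    exact ⟨∅, c, rfl, by simp, fun j _ => hc ⟨j, rfl⟩⟩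
  | succ k ih =>
    obtain ⟨s, c, hs, hsc, hcs⟩ := ih (by omega)
    have hne : sᶜ.Nonempty := by
      rw [← Finset.card_pos, Finset.card_compl, hs]
      omega
    obtain ⟨j₀, hj₀, hmax⟩ := Finset.exists_max_image sᶜ a hne
    rw [Finset.mem_compl] at hj₀
    refine ⟨insert j₀ s, a j₀, by rw [Finset.card_insert_of_notMem hj₀, hs], ?_, ?_⟩
    · simp only [Finset.mem_insert, forall_eq_or_imp, le_refl, true_and]
      exact fun i hi => (hcs j₀ hj₀).trans (hsc i hi)
    · intro j hj
      exact hmax j (Finset.mem_compl.2 fun h => hj (Finset.mem_insert_of_mem h))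

lemma sum_mul_le_sumKLargest (a d : ι → ℝ) {k : ℕ} (hk : k ≤ Fintype.card ι)
    (hd₀ : ∀ i, 0 ≤ d i) (hd₁ : ∀ i, d i ≤ 1) (hd : ∑ i, d i = k) :
    ∑ i, a i * d i ≤ sumKLargest a k := by
  classical
  obtain ⟨s, c, hs, hsc, hcs⟩ := exists_finset_card_eq_separated a hk
  have hin : ∑ i ∈ s, (a i - c) * d i ≤ ∑ i ∈ s, (a i - c) :=
    Finset.sum_le_sum fun i hi => mul_le_of_le_one_right (sub_nonneg.2 (hsc i hi)) (hd₁ i)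
  have hout : ∑ i ∈ sᶜ, (a i - c) * d i ≤ 0 :=
    Finset.sum_nonpos fun j hj =>
      mul_nonpos_of_nonpos_of_nonneg (sub_nonpos.2 (hcs j (Finset.mem_compl.1 hj))) (hd₀ j)
  calc ∑ i, a i * d i = ∑ i ∈ s, (a i - c) * d i + ∑ i ∈ sᶜ, (a i - c) * d i + c * k := by
        rw [Finset.sum_add_sum_compl, ← hd, Finset.mul_sum, ← Finset.sum_add_distrib]
        exact Finset.sum_congr rfl fun i _ => by ring
    _ ≤ ∑ i ∈ s, (a i - c) + c * k := by linarith
    _ = ∑ i ∈ s, a i := by rw [Finset.sum_sub_distrib, Finset.sum_const, hs, nsmul_eq_mul]; ring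
    _ ≤ sumKLargest a k := le_sumKLargest a hs

end SumKLargest

namespace Matrix

variable {n : Type*} [Fintype n]

lemma trace_mul_hadamard {R : Type*} [CommSemiring R] (P C A : Matrix n n R) :
    (P * (C ⊙ A)).trace = ((Cᵀ ⊙ P) * A).trace := by
  simp only [trace, diag_apply, mul_apply, hadamard_apply, transpose_apply]
  exact Finset.sum_congr rfl fun i _ => Finset.sum_congr rfl fun j _ => by ring

variable [DecidableEq n]

lemma trace_mul_eq_sum_mul_diag {R : Type*} [CommSemiring R] {A U V : Matrix n n R}
    {d : n → R} (hA : A = U * diagonal d * V) (M : Matrix n n R) :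
    (M * A).trace = ∑ i, d i * (V * M * U).diag i := by
  rw [hA, ← mul_assoc, ← mul_assoc, trace_mul_cycle, ← mul_assoc, trace]
  simp [mul_diagonal, mul_comm]

lemma IsHermitian.eq_eigenvectorUnitary_mul_diagonal_mul_star {A : Matrix n n ℝ}
    (hA : A.IsHermitian) :
    A = (hA.eigenvectorUnitary : Matrix n n ℝ) * diagonal hA.eigenvalues *
      star (hA.eigenvectorUnitary : Matrix n n ℝ) := by
  simpa using hA.spectral_theorem

lemma IsHermitian.trace_mul_le_sumKLargest_eigenvalues {A X : Matrix n n ℝ}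
    (hA : A.IsHermitian) (hX₀ : X.PosSemidef) (hX₁ : (1 - X).PosSemidef) {k : ℕ}
    (hk : k ≤ Fintype.card n) (hX : X.trace = k) :
    (X * A).trace ≤ sumKLargest hA.eigenvalues k := by
  set U : Matrix n n ℝ := (hA.eigenvectorUnitary : Matrix n n ℝ)
  have hUU : star U * U = 1 := Unitary.star_mul_self_of_mem hA.eigenvectorUnitary.2
  have hUU' : U * star U = 1 := Unitary.mul_star_self_of_mem hA.eigenvectorUnitary.2
  have hY₀ : (star U * X * U).PosSemidef := hX₀.conjTranspose_mul_mul_same U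
  have hY₁ : (1 - star U * X * U).PosSemidef := by
    rw [← hUU, ← mul_one_sub_mul]
    exact hX₁.conjTranspose_mul_mul_same U
  rw [trace_mul_eq_sum_mul_diag hA.eq_eigenvectorUnitary_mul_diagonal_mul_star]
  refine sum_mul_le_sumKLargest _ _ hk (fun i => hY₀.diag_nonneg) (fun i => ?_) ?_
  · simpa using hY₁.diag_nonneg (i := i)
  · rw [← hX, ← trace, trace_mul_cycle, hUU', one_mul]

lemma IsHermitian.exists_trace_mul_eq_sum_eigenvalues {B : Matrix n n ℝ} (hB : B.IsHermitian)
    (s : Finset n) :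
    ∃ P : Matrix n n ℝ, P.PosSemidef ∧ (1 - P).PosSemidef ∧ P.trace = s.card ∧
      (P * B).trace = ∑ i ∈ s, hB.eigenvalues i := by
  set V : Matrix n n ℝ := (hB.eigenvectorUnitary : Matrix n n ℝ)
  have hVV : star V * V = 1 := Unitary.star_mul_self_of_mem hB.eigenvectorUnitary.2
  have hVV' : V * star V = 1 := Unitary.mul_star_self_of_mem hB.eigenvectorUnitary.2
  set Q : Matrix n n ℝ := diagonal fun i => if i ∈ s then 1 else 0
  have hQ₀ : Q.PosSemidef := PosSemidef.diagonal fun i => by dsimp; split_ifs <;> norm_num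
  have hQ₁ : (1 - Q).PosSemidef := by
    rw [← diagonal_one, diagonal_sub]
    exact PosSemidef.diagonal fun i => by dsimp; split_ifs <;> norm_num
  refine ⟨V * Q * star V, hQ₀.mul_mul_conjTranspose_same V, ?_, ?_, ?_⟩
  · rw [← hVV', ← mul_one_sub_mul]
    exact hQ₁.mul_mul_conjTranspose_same V
  · rw [trace_mul_cycle, hVV, one_mul, trace_diagonal, Finset.sum_boole]
    simp
  · rw [trace_mul_eq_sum_mul_diag hB.eq_eigenvectorUnitary_mul_diagonal_mul_star]
    have hQ : star V * (V * Q * star V) * V = Q := by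
      rw [← mul_assoc, ← mul_assoc, hVV, one_mul, mul_assoc, hVV, mul_one]
    simp [V, hQ, Q, Finset.sum_ite_mem]

theorem majorizedBy_eigenvalues_of_eq_hadamard {A B C : Matrix n n ℝ} (hA : A.IsHermitian)
    (hB : B.IsHermitian) (hC : C.PosSemidef) (hCdiag : ∀ i, C i i = 1) (hBCA : B = C ⊙ A) :
    MajorizedBy hB.eigenvalues hA.eigenvalues := by
  refine ⟨fun k hk => sumKLargest_le _ hk fun s hs => ?_, ?_⟩
  · obtain ⟨P, hP₀, hP₁, hPtr, hPB⟩ := hB.exists_trace_mul_eq_sum_eigenvalues s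
    have hCP : Cᵀ ⊙ (1 - P) = 1 - Cᵀ ⊙ P := by
      ext i j
      by_cases h : i = j
      · simp [h, hCdiag, mul_sub]
      · simp [one_apply_ne h]
    rw [← hPB, hBCA, trace_mul_hadamard]
    refine hA.trace_mul_le_sumKLargest_eigenvalues (hC.transpose.hadamard hP₀) ?_ hk ?_
    · simpa [hCP] using hC.transpose.hadamard hP₁
    · simp [trace, hCdiag, ← hs, ← hPtr]
  · have htr : B.trace = A.trace := by simp [hBCA, trace, hCdiag]
    simpa [hA.trace_eq_sum_eigenvalues, hB.trace_eq_sum_eigenvalues] using htr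

end Matrix

/-- Coefficients of the AR(1) recursion `x₀ = ε₀`, `xᵢ = t xᵢ₋₁ + √(1 - t²) εᵢ`: row `i` of
the Cholesky factor of `expCorr n t`. -/
def expCorrCholesky (t : ℝ) (i m : ℕ) : ℝ :=
  if m ≤ i then t ^ (i - m) * (if m = 0 then 1 else √(1 - t ^ 2)) else 0

lemma expCorrCholesky_mul_expCorrCholesky {t : ℝ} {i j : ℕ} (hji : j ≤ i) (m : ℕ) :
    expCorrCholesky t i m * expCorrCholesky t j m = t ^ (i - j) * expCorrCholesky t j m ^ 2 := by
  by_cases hmj : m ≤ j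
  · have him : i - m = (i - j) + (j - m) := by omega
    simp only [expCorrCholesky, if_pos hmj, if_pos (hmj.trans hji), him, pow_add]
    ring
  · simp [expCorrCholesky, hmj]

lemma sum_range_expCorrCholesky_sq {t : ℝ} (ht : t ^ 2 ≤ 1) (j : ℕ) :
    ∑ m ∈ Finset.range (j + 1), expCorrCholesky t j m ^ 2 = 1 := by
  induction j with
  | zero => simp [expCorrCholesky]
  | succ j ih =>
    have hrow : ∀ m ∈ Finset.range (j + 1),
        expCorrCholesky t (j + 1) m ^ 2 = t ^ 2 * expCorrCholesky t j m ^ 2 := by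
      intro m hm
      have hmj : m ≤ j := Nat.lt_succ_iff.1 (Finset.mem_range.1 hm)
      simp only [expCorrCholesky, if_pos hmj, if_pos (hmj.trans j.le_succ),
        Nat.sub_add_comm hmj, pow_succ]
      ring
    rw [Finset.sum_range_succ, Finset.sum_congr rfl hrow, ← Finset.mul_sum, ih]
    simp [expCorrCholesky, Real.sq_sqrt (sub_nonneg.2 ht)]

lemma expCorr_eq_mul_conjTranspose {n : ℕ} {t : ℝ} (ht : t ^ 2 ≤ 1) :
    expCorr n t = of (fun i m : Fin n => expCorrCholesky t i m) *
      (of fun i m : Fin n => expCorrCholesky t i m)ᴴ := by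
  have hrow : ∀ j : Fin n, ∑ m : Fin n, expCorrCholesky t j m ^ 2 = 1 := by
    intro j
    rw [Fin.sum_univ_eq_sum_range (fun m => expCorrCholesky t j m ^ 2),
      ← sum_range_expCorrCholesky_sq ht j]
    refine (Finset.sum_subset (Finset.range_subset_range.2 j.isLt) fun m _ hm => ?_).symm
    have hjm : ¬m ≤ j := fun h => hm (Finset.mem_range.2 (Nat.lt_succ_of_le h))
    simp [expCorrCholesky, hjm]
  have hentry : ∀ i j : Fin n, j ≤ i →
      ∑ m : Fin n, expCorrCholesky t i m * expCorrCholesky t j m = t ^ ((i : ℤ) - j).natAbs := by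
    intro i j hji
    simp_rw [expCorrCholesky_mul_expCorrCholesky (Fin.le_def.1 hji), ← Finset.mul_sum, hrow j]
    rw [mul_one]
    congr 1
    omega
  ext i j
  simp only [expCorr, of_apply, mul_apply, conjTranspose_apply, star_trivial]
  rcases le_total j i with hji | hij
  · exact (hentry i j hji).symm
  · rw [← Int.natAbs_neg, neg_sub, ← hentry j i hij]
    simp_rw [mul_comm]

lemma expCorr_posSemidef {n : ℕ} {t : ℝ} (ht : t ^ 2 ≤ 1) : (expCorr n t).PosSemidef := by
  rw [expCorr_eq_mul_conjTranspose ht]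
  exact posSemidef_self_mul_conjTranspose _

lemma expCorr_hadamard (n : ℕ) (s ρ : ℝ) : expCorr n s ⊙ expCorr n ρ = expCorr n (s * ρ) := by
  ext
  simp [expCorr, mul_pow]

lemma expCorr_apply_self {n : ℕ} (ρ : ℝ) (i : Fin n) : expCorr n ρ i i = 1 := by
  simp [expCorr]

theorem expCorr_eigenvalues_majorized_general
    (n : ℕ) (ρ₁ ρ₂ : ℝ) (h0 : 0 ≤ ρ₁) (h12 : ρ₁ ≤ ρ₂) :
    MajorizedBy (expCorr_isHermitian n ρ₁).eigenvalues
      (expCorr_isHermitian n ρ₂).eigenvalues := by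
  have hρ₂ : 0 ≤ ρ₂ := h0.trans h12
  have ht : (ρ₁ / ρ₂) ^ 2 ≤ 1 := pow_le_one₀ (div_nonneg h0 hρ₂) (div_le_one_of_le₀ h12 hρ₂)
  have hρ : ρ₁ / ρ₂ * ρ₂ = ρ₁ := by
    rcases hρ₂.eq_or_lt with h | h
    · simp [← h, le_antisymm (h ▸ h12) h0]
    · exact div_mul_cancel₀ ρ₁ h.ne'
  refine Matrix.majorizedBy_eigenvalues_of_eq_hadamard _ _ (expCorr_posSemidef ht)
    (expCorr_apply_self _) ?_
  rw [expCorr_hadamard, hρ]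

/-- **Eigenvalue majorization for exponential correlation matrices**:
for `0 ≤ ρ₁ ≤ ρ₂`, the eigenvalues of `E_n(ρ₁)` are majorized by those of
`E_n(ρ₂)`. -/
theorem expCorr_eigenvalues_majorized
    (n : ℕ) (hn : 1 ≤ n) (ρ₁ ρ₂ : ℝ) (h0 : 0 ≤ ρ₁) (h12 : ρ₁ ≤ ρ₂) :
    MajorizedBy (expCorr_isHermitian n ρ₁).eigenvalues
      (expCorr_isHermitian n ρ₂).eigenvalues :=
  expCorr_eigenvalues_majorized_general n ρ₁ ρ₂ h0 h12

end
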